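/- Let M be a matroid on a finite ground set U, let L be a list enumerating every element of U exactly once (an arrival order), and let R ⊆ U. Define the greedy output A(R) ⊆ U as follows: starting from A = ∅, process the elements e of L in order, and add e to A whenever e ∈ R and A ∪ {e} is independent in M. Then every element e ∈ R with e ∉ span(R \ {e}) belongs to A(R); in particular, A(R) is independent in M. -/

import Mathlib

open Classical

/-- A matroid on a finite ground set `α`, given by its independent sets. -/
structure FinMatroid (α : Type*) [DecidableEq α] [Fintype α] where
  /-- The independent sets. -/
  Indep : Finset α → Prop
  indep_empty : Indep ∅
  indep_subset : ∀ ⦃I J : Finset α⦄, Indep J → I ⊆ J → Indep I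
  indep_exchange : ∀ ⦃I J : Finset α⦄, Indep I → Indep J → I.card < J.card →
    ∃ e ∈ J, e ∉ I ∧ Indep (insert e I)

namespace FinMatroid

variable {α : Type*} [DecidableEq α] [Fintype α]

/-- A basis of the matroid: a maximal independent set. -/
def Base (M : FinMatroid α) (B : Finset α) : Prop :=
  M.Indep B ∧ ∀ e : α, e ∉ B → ¬ M.Indep (insert e B)

/-- The rank of a set: the size of a largest independent subset. -/
noncomputable def rank (M : FinMatroid α) (S : Finset α) : ℕ :=
  (S.powerset.filter M.Indep).sup Finset.card

/-- The span of a set: the elements whose insertion does not increase the rank. -/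
noncomputable def span (M : FinMatroid α) (S : Finset α) : Finset α :=
  Finset.univ.filter fun e => M.rank (insert e S) = M.rank S

end FinMatroid

namespace FinMatroid

variable {α : Type*} [DecidableEq α] [Fintype α]

/-- The greedy algorithm: process the elements of the list `L` in order, starting from
`∅`, and take an arriving element `e` whenever `e ∈ R` and this keeps the current set
independent. -/
noncomputable def greedy (M : FinMatroid α) (R : Finset α) (L : List α) : Finset α :=
  L.foldl (fun A e => if e ∈ R ∧ M.Indep (insert e A) then insert e A else A) ∅

end FinMatroid

/-!
Each greedy step keeps the current set independent and inside `R`. When `e ∈ R` arrives, the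
current set is an independent subset of `R \ {e}` (or already contains `e`), and an element
outside the span of `R \ {e}` can be added to any independent subset of `R \ {e}`.
-/

namespace FinMatroid

variable {α : Type*} [DecidableEq α] [Fintype α] (M : FinMatroid α)

lemma card_le_rank {I S : Finset α} (hI : M.Indep I) (hIS : I ⊆ S) : I.card ≤ M.rank S :=
  Finset.le_sup (Finset.mem_filter.2 ⟨Finset.mem_powerset.2 hIS, hI⟩)

lemma exists_indep_card_eq_rank (S : Finset α) :
    ∃ I ⊆ S, M.Indep I ∧ I.card = M.rank S := by
  obtain ⟨I, hI, h⟩ := Finset.exists_mem_eq_sup (S.powerset.filter M.Indep)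
    ⟨∅, Finset.mem_filter.2 ⟨Finset.empty_mem_powerset S, M.indep_empty⟩⟩ Finset.card
  rw [Finset.mem_filter, Finset.mem_powerset] at hI
  exact ⟨I, hI.1, hI.2, h.symm⟩

lemma rank_mono {S T : Finset α} (h : S ⊆ T) : M.rank S ≤ M.rank T :=
  Finset.sup_mono (Finset.filter_subset_filter _ (Finset.powerset_mono.2 h))

lemma exists_indep_superset_card_eq {I J : Finset α} (hI : M.Indep I) (hJ : M.Indep J)
    (hIJ : I.card ≤ J.card) : ∃ K, I ⊆ K ∧ K ⊆ I ∪ J ∧ M.Indep K ∧ K.card = J.card := by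
  induction h : J.card - I.card generalizing I with
  | zero => exact ⟨I, subset_rfl, Finset.subset_union_left, hI, by omega⟩
  | succ n ih =>
    obtain ⟨x, hxJ, hxI, hx⟩ := M.indep_exchange hI hJ (by omega)
    have hcard := Finset.card_insert_of_notMem hxI
    obtain ⟨K, hIK, hKIJ, hK, hKcard⟩ := ih hx (by omega) (by omega)
    refine ⟨K, (Finset.subset_insert x I).trans hIK, hKIJ.trans ?_, hK, hKcard⟩
    exact Finset.union_subset (Finset.insert_subset (Finset.mem_union_right I hxJ)
      Finset.subset_union_left) Finset.subset_union_right

/- Augment `A` from a largest independent subset of `insert e T`: the result is too large to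
lie inside `T`, so it contains `e`. -/
lemma indep_insert_of_notMem_span {A T : Finset α} {e : α} (hA : M.Indep A) (hAT : A ⊆ T)
    (he : e ∉ M.span T) : M.Indep (insert e A) := by
  have hrank : M.rank T < M.rank (insert e T) := by
    have hne : M.rank (insert e T) ≠ M.rank T := by simpa [span] using he
    have := M.rank_mono (Finset.subset_insert e T)
    omega
  obtain ⟨J, hJ, hJind, hJcard⟩ := M.exists_indep_card_eq_rank (insert e T)
  have hAJ := M.card_le_rank hA hAT
  obtain ⟨K, hAK, hKAJ, hK, hKcard⟩ := M.exists_indep_superset_card_eq hA hJind (by omega)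
  have heK : e ∈ K := by
    by_contra heK
    have hKT : K ⊆ T := fun x hx => by
      have := hKAJ hx
      rw [Finset.mem_union] at this
      rcases this with hxA | hxJ
      · exact hAT hxA
      · exact (Finset.mem_insert.1 (hJ hxJ)).resolve_left (by rintro rfl; exact heK hx)
    have := M.card_le_rank hK hKT
    omega
  exact M.indep_subset hK (Finset.insert_subset heK hAK)

noncomputable def greedyStep (R A : Finset α) (e : α) : Finset α :=
  if e ∈ R ∧ M.Indep (insert e A) then insert e A else A

lemma greedy_eq_foldl (R : Finset α) (L : List α) :
    M.greedy R L = L.foldl (M.greedyStep R) ∅ :=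
  rfl

lemma subset_greedyStep (R A : Finset α) (e : α) : A ⊆ M.greedyStep R A e := by
  unfold greedyStep
  split_ifs
  exacts [Finset.subset_insert e A, subset_rfl]

lemma greedyStep_indep_subset {R A : Finset α} (hA : M.Indep A) (hAR : A ⊆ R) (e : α) :
    M.Indep (M.greedyStep R A e) ∧ M.greedyStep R A e ⊆ R := by
  unfold greedyStep
  split_ifs with h
  exacts [⟨h.2, Finset.insert_subset h.1 hAR⟩, ⟨hA, hAR⟩]

lemma mem_greedyStep_self {R A : Finset α} {e : α} (hA : M.Indep A) (hAR : A ⊆ R)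
    (heR : e ∈ R) (he : e ∉ M.span (R.erase e)) : e ∈ M.greedyStep R A e := by
  by_cases heA : e ∈ A
  · exact M.subset_greedyStep R A e heA
  have hAR' : A ⊆ R.erase e := fun x hx =>
    Finset.mem_erase.2 ⟨by rintro rfl; exact heA hx, hAR hx⟩
  rw [greedyStep, if_pos ⟨heR, M.indep_insert_of_notMem_span hA hAR' he⟩]
  exact Finset.mem_insert_self e A

lemma subset_foldl_greedyStep (R A : Finset α) (L : List α) :
    A ⊆ L.foldl (M.greedyStep R) A := by
  induction L generalizing A with
  | nil => exact subset_rfl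
  | cons a L ih => exact (M.subset_greedyStep R A a).trans (ih _)

lemma foldl_greedyStep_indep_subset {R A : Finset α} (hA : M.Indep A) (hAR : A ⊆ R)
    (L : List α) : M.Indep (L.foldl (M.greedyStep R) A) ∧ L.foldl (M.greedyStep R) A ⊆ R := by
  induction L generalizing A with
  | nil => exact ⟨hA, hAR⟩
  | cons a L ih =>
    obtain ⟨hA', hAR'⟩ := M.greedyStep_indep_subset hA hAR a
    exact ih hA' hAR'

lemma mem_greedy {R : Finset α} {L : List α} {e : α} (heL : e ∈ L) (heR : e ∈ R)
    (he : e ∉ M.span (R.erase e)) : e ∈ M.greedy R L := by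
  obtain ⟨l₁, l₂, rfl⟩ := List.append_of_mem heL
  obtain ⟨hA, hAR⟩ := M.foldl_greedyStep_indep_subset M.indep_empty (Finset.empty_subset R) l₁
  rw [greedy_eq_foldl, List.foldl_append, List.foldl_cons]
  exact M.subset_foldl_greedyStep R _ l₂ (M.mem_greedyStep_self hA hAR heR he)

lemma indep_greedy (R : Finset α) (L : List α) : M.Indep (M.greedy R L) :=
  (M.foldl_greedyStep_indep_subset M.indep_empty (Finset.empty_subset R) L).1

end FinMatroid

theorem stmt_12_general {α : Type*} [DecidableEq α] [Fintype α] (M : FinMatroid α)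
    (L : List α) (hall : ∀ x : α, x ∈ L) (R : Finset α) :
    (∀ e ∈ R, e ∉ M.span (R.erase e) → e ∈ M.greedy R L) ∧ M.Indep (M.greedy R L) :=
  ⟨fun e heR he => M.mem_greedy (hall e) heR he, M.indep_greedy R L⟩

/-- Every element of `R` not spanned by the rest of `R` is accepted by the greedy
algorithm; in particular the greedy output is independent. -/
theorem stmt_12 {α : Type*} [DecidableEq α] [Fintype α] (M : FinMatroid α)
    (L : List α) (hnodup : L.Nodup) (hall : ∀ x : α, x ∈ L) (R : Finset α) :
    (∀ e ∈ R, e ∉ M.span (R.erase e) → e ∈ M.greedy R L) ∧ M.Indep (M.greedy R L) :=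
  stmt_12_general M L hall R
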